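/- arXiv:1811.05319 — 4 statements merged into one kernel-verified Lean document; each statement's English description precedes it below -/
import Mathlib

section
/- For the trigonometric system on [0,1], the kernel bound holds: for every integer d ≥ 3, the integral over [0,1] of the function Φ*_d(v) = sup_{t ∈ [v,1]} |Σ_{j=1}^d φ_j(t)φ_j(t−v)| is at most 5 + ln d, where (φ_j) is the trigonometric basis φ_1 ≡ 1, φ_j(x) = √2 cos(2π[j/2]x) for even j, φ_j(x) = √2 sin(2π[j/2]x) for odd j. -/
open MeasureTheory Real

/-- The trigonometric basis: `Tr 1 ≡ 1`, for even `j ≥ 2`,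
`Tr j x = √2 cos(2π[j/2]x)`, and for odd `j ≥ 3`, `Tr j x = √2 sin(2π[j/2]x)`. -/
noncomputable def Tr (j : ℕ) (x : ℝ) : ℝ :=
  if j = 1 then 1
  else if Even j then Real.sqrt 2 * Real.cos (2 * Real.pi * (j / 2 : ℕ) * x)
  else Real.sqrt 2 * Real.sin (2 * Real.pi * (j / 2 : ℕ) * x)

/-- `Φ*_d(v) = sup_{t ∈ [v,1]} |∑_{j=1}^d Tr_j(t) Tr_j(t − v)|`. -/
noncomputable def PhiStar (d : ℕ) (v : ℝ) : ℝ :=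
  sSup ((fun t => |∑ j ∈ Finset.Icc 1 d, Tr j t * Tr j (t - v)|) '' Set.Icc v 1)

lemma Tr_one (x : ℝ) : Tr 1 x = 1 := by simp [Tr]

lemma Tr_even (k : ℕ) (hk : 1 ≤ k) (x : ℝ) :
    Tr (2 * k) x = Real.sqrt 2 * Real.cos (2 * π * k * x) := by
  have h1 : 2 * k ≠ 1 := by omega
  have h2 : Even (2 * k) := even_two_mul k
  have h3 : (2 * k) / 2 = k := by omega
  simp [Tr, h1, h2, h3]

lemma Tr_odd (k : ℕ) (hk : 1 ≤ k) (x : ℝ) :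
    Tr (2 * k + 1) x = Real.sqrt 2 * Real.sin (2 * π * k * x) := by
  have h1 : 2 * k + 1 ≠ 1 := by omega
  have h2 : ¬ Even (2 * k + 1) := by simp [Nat.even_add_one, Nat.even_mul]
  have h3 : (2 * k + 1) / 2 = k := by omega
  simp [Tr, h1, h2, h3]
  intro h
  exact absurd h (by omega)

lemma Tr_abs_le (j : ℕ) (x : ℝ) : |Tr j x| ≤ Real.sqrt 2 := by
  have h2 : (1:ℝ) ≤ Real.sqrt 2 := by
    rw [show (1:ℝ) = Real.sqrt 1 by simp]
    exact Real.sqrt_le_sqrt (by norm_num)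
  have hs : (0:ℝ) ≤ Real.sqrt 2 := Real.sqrt_nonneg 2
  unfold Tr
  split_ifs with h h'
  · simpa using h2
  · rw [abs_mul, abs_of_nonneg hs]
    calc Real.sqrt 2 * |Real.cos _| ≤ Real.sqrt 2 * 1 :=
      mul_le_mul_of_nonneg_left (Real.abs_cos_le_one _) hs
    _ = Real.sqrt 2 := mul_one _
  · rw [abs_mul, abs_of_nonneg hs]
    calc Real.sqrt 2 * |Real.sin _| ≤ Real.sqrt 2 * 1 :=
      mul_le_mul_of_nonneg_left (Real.abs_sin_le_one _) hs
    _ = Real.sqrt 2 := mul_one _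

lemma pair_eq (k : ℕ) (hk : 1 ≤ k) (t v : ℝ) :
    Tr (2 * k) t * Tr (2 * k) (t - v) + Tr (2 * k + 1) t * Tr (2 * k + 1) (t - v)
      = 2 * Real.cos (2 * π * k * v) := by
  rw [Tr_even k hk, Tr_even k hk, Tr_odd k hk, Tr_odd k hk]
  have hs : Real.sqrt 2 * Real.sqrt 2 = 2 := Real.mul_self_sqrt (by norm_num)
  have harg : 2 * π * k * t - 2 * π * k * (t - v) = 2 * π * k * v := by ring
  have hc := Real.cos_sub (2 * π * k * t) (2 * π * k * (t - v))
  rw [harg] at hc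
  linear_combination (-2) * hc + (Real.cos (2 * π * (k:ℝ) * t) * Real.cos (2 * π * (k:ℝ) * (t - v)) +
    Real.sin (2 * π * (k:ℝ) * t) * Real.sin (2 * π * (k:ℝ) * (t - v))) * hs

lemma sum_odd (K : ℕ) (t v : ℝ) :
    ∑ j ∈ Finset.Icc 1 (2 * K + 1), Tr j t * Tr j (t - v)
      = 1 + ∑ k ∈ Finset.Icc 1 K, 2 * Real.cos (2 * π * k * v) := by
  induction K with
  | zero => simp [Tr_one]
  | succ K ih =>
    have e1 : 2 * (K + 1) + 1 = (2 * K + 2) + 1 := by ring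
    rw [e1, Finset.sum_Icc_succ_top (by omega), show 2 * K + 2 = (2 * K + 1) + 1 by ring,
      Finset.sum_Icc_succ_top (by omega), ih, Finset.sum_Icc_succ_top (by omega : 1 ≤ K + 1)]
    have := pair_eq (K + 1) (by omega) t v
    have e2 : 2 * (K + 1) = 2 * K + 1 + 1 := by ring
    rw [e2] at this
    push_cast at this ⊢
    linarith [this]

lemma dirichlet (K : ℕ) (v : ℝ) :
    Real.sin (π * v) * (1 + ∑ k ∈ Finset.Icc 1 K, 2 * Real.cos (2 * π * k * v))
      = Real.sin ((2 * K + 1) * π * v) := by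
  induction K with
  | zero => norm_num
  | succ K ih =>
    rw [Finset.sum_Icc_succ_top (by omega : 1 ≤ K + 1)]
    push_cast at ih ⊢
    have hA := Real.sin_add (2 * π * ((K:ℝ) + 1) * v) (π * v)
    have hB := Real.sin_sub (2 * π * ((K:ℝ) + 1) * v) (π * v)
    have e1 : (2 * ((K:ℝ) + 1) + 1) * π * v = 2 * π * ((K:ℝ) + 1) * v + π * v := by ring
    have e2 : (2 * (K:ℝ) + 1) * π * v = 2 * π * ((K:ℝ) + 1) * v - π * v := by ring
    rw [e1, hA]
    rw [e2, hB] at ih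
    linear_combination ih


lemma term_abs_le (j : ℕ) (t v : ℝ) : |Tr j t * Tr j (t - v)| ≤ 2 := by
  rw [abs_mul]
  calc |Tr j t| * |Tr j (t - v)| ≤ Real.sqrt 2 * Real.sqrt 2 :=
        mul_le_mul (Tr_abs_le j t) (Tr_abs_le j (t - v)) (abs_nonneg _) (Real.sqrt_nonneg 2)
    _ = 2 := Real.mul_self_sqrt (by norm_num)

lemma sum_abs_le (d : ℕ) (t v : ℝ) :
    |∑ j ∈ Finset.Icc 1 d, Tr j t * Tr j (t - v)| ≤ 2 * d := by
  calc |∑ j ∈ Finset.Icc 1 d, Tr j t * Tr j (t - v)|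
      ≤ ∑ j ∈ Finset.Icc 1 d, |Tr j t * Tr j (t - v)| := Finset.abs_sum_le_sum_abs _ _
    _ ≤ ∑ _j ∈ Finset.Icc 1 d, 2 := Finset.sum_le_sum fun j _ => term_abs_le j t v
    _ = 2 * d := by simp [Nat.card_Icc, mul_comm]

lemma sum_decomp (d : ℕ) (hd : 3 ≤ d) (t v : ℝ) :
    ∃ K : ℕ, 2 * K + 1 ≤ d ∧
      |∑ j ∈ Finset.Icc 1 d, Tr j t * Tr j (t - v)|
        ≤ |1 + ∑ k ∈ Finset.Icc 1 K, 2 * Real.cos (2 * π * k * v)| + 2 := by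
  rcases Nat.even_or_odd d with he | ho
  · obtain ⟨m, hm⟩ := he
    have hm2 : 2 ≤ m := by omega
    refine ⟨m - 1, by omega, ?_⟩
    have hd' : d = (2 * (m - 1) + 1) + 1 := by omega
    rw [hd', Finset.sum_Icc_succ_top (by omega), sum_odd]
    calc |(1 + ∑ k ∈ Finset.Icc 1 (m-1), 2 * Real.cos (2 * π * k * v))
            + Tr (2*(m-1)+1+1) t * Tr (2*(m-1)+1+1) (t - v)|
        ≤ |1 + ∑ k ∈ Finset.Icc 1 (m-1), 2 * Real.cos (2 * π * k * v)|
            + |Tr (2*(m-1)+1+1) t * Tr (2*(m-1)+1+1) (t - v)| := abs_add_le _ _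
      _ ≤ _ := by have := term_abs_le (2*(m-1)+1+1) t v; linarith
  · obtain ⟨m, hm⟩ := ho
    refine ⟨m, by omega, ?_⟩
    rw [hm, sum_odd]
    linarith [abs_nonneg (1 + ∑ k ∈ Finset.Icc 1 m, 2 * Real.cos (2 * π * k * v))]

lemma DK_le_card (K : ℕ) (v : ℝ) :
    |1 + ∑ k ∈ Finset.Icc 1 K, 2 * Real.cos (2 * π * k * v)| ≤ 2 * K + 1 := by
  calc |1 + ∑ k ∈ Finset.Icc 1 K, 2 * Real.cos (2 * π * k * v)|
      ≤ |(1:ℝ)| + |∑ k ∈ Finset.Icc 1 K, 2 * Real.cos (2 * π * k * v)| := abs_add_le _ _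
    _ ≤ 1 + ∑ k ∈ Finset.Icc 1 K, |2 * Real.cos (2 * π * k * v)| := by
        have := Finset.abs_sum_le_sum_abs
          (fun k : ℕ => 2 * Real.cos (2 * π * k * v)) (Finset.Icc 1 K)
        simp only [abs_one]; linarith
    _ ≤ 1 + ∑ _k ∈ Finset.Icc 1 K, 2 := by
        gcongr with k hk
        rw [abs_mul, abs_two]
        nlinarith [Real.abs_cos_le_one (2 * π * (k:ℝ) * v)]
    _ ≤ 2 * K + 1 := by simp [Nat.card_Icc]; ring_nf; norm_num
  
lemma DK_le_inv_sin (K : ℕ) (v : ℝ) (hs : 0 < Real.sin (π * v)) :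
    |1 + ∑ k ∈ Finset.Icc 1 K, 2 * Real.cos (2 * π * k * v)| ≤ 1 / Real.sin (π * v) := by
  rw [le_div_iff₀ hs]
  calc |1 + ∑ k ∈ Finset.Icc 1 K, 2 * Real.cos (2 * π * k * v)| * Real.sin (π * v)
      = |Real.sin (π * v) * (1 + ∑ k ∈ Finset.Icc 1 K, 2 * Real.cos (2 * π * k * v))| := by
        rw [abs_mul, abs_of_pos hs]; ring
    _ = |Real.sin ((2 * K + 1) * π * v)| := by rw [dirichlet]
    _ ≤ 1 := Real.abs_sin_le_one _

lemma sin_ge (v : ℝ) (hv : v ∈ Set.Ioo (0:ℝ) 1) :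
    2 * min v (1 - v) ≤ Real.sin (π * v) := by
  obtain ⟨hv0, hv1⟩ := hv
  have hπ := Real.pi_pos
  rcases le_total v (1 - v) with h | h
  · rw [min_eq_left h]
    have h2 : v ≤ 1/2 := by linarith
    have := Real.mul_le_sin (x := π * v) (by positivity) (by nlinarith)
    calc 2 * v = 2 / π * (π * v) := by field_simp
      _ ≤ Real.sin (π * v) := this
  · rw [min_eq_right h]
    have h2 : 1 - v ≤ 1/2 := by linarith
    have h3 : (0:ℝ) ≤ 1 - v := by linarith
    have := Real.mul_le_sin (x := π * (1 - v)) (by positivity) (by nlinarith)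
    have e : Real.sin (π * v) = Real.sin (π * (1 - v)) := by
      rw [show π * (1 - v) = π - π * v by ring, Real.sin_pi_sub]
    rw [e]
    calc 2 * (1 - v) = 2 / π * (π * (1 - v)) := by field_simp
      _ ≤ Real.sin (π * (1 - v)) := this

noncomputable def Bfun (d : ℕ) (v : ℝ) : ℝ :=
  2 + min (d:ℝ) (1 / (2 * v)) + min (d:ℝ) (1 / (2 * (1 - v)))

lemma phiStar_le (d : ℕ) (hd : 3 ≤ d) (v : ℝ) (hv : v ∈ Set.Ioo (0:ℝ) 1) :
    PhiStar d v ≤ Bfun d v := by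
  obtain ⟨hv0, hv1⟩ := hv
  have hd0 : (0:ℝ) ≤ d := by positivity
  have hm1 : (0:ℝ) ≤ min (d:ℝ) (1 / (2 * v)) := le_min hd0 (by positivity)
  have hv1' : (0:ℝ) < 1 - v := by linarith
  have hm2 : (0:ℝ) ≤ min (d:ℝ) (1 / (2 * (1 - v))) := le_min hd0 (by positivity)
  apply Real.sSup_le _ (by unfold Bfun; linarith)
  rintro x ⟨t, ht, rfl⟩
  obtain ⟨K, hK, hle⟩ := sum_decomp d hd t v
  have hπ := Real.pi_pos
  have hs : 0 < Real.sin (π * v) :=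
    Real.sin_pos_of_pos_of_lt_pi (by positivity) (by nlinarith)
  have h1 : |1 + ∑ k ∈ Finset.Icc 1 K, 2 * Real.cos (2 * π * k * v)| ≤ (d:ℝ) := by
    calc _ ≤ 2 * (K:ℝ) + 1 := DK_le_card K v
      _ ≤ (d:ℝ) := by exact_mod_cast Nat.cast_le.mpr hK
  have h2 := DK_le_inv_sin K v hs
  have hmin : 0 < min v (1 - v) := lt_min hv0 (by linarith)
  have h3 : 1 / Real.sin (π * v) ≤ 1 / (2 * min v (1 - v)) :=
    one_div_le_one_div_of_le (by linarith) (sin_ge v ⟨hv0, hv1⟩)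
  have h4 : |1 + ∑ k ∈ Finset.Icc 1 K, 2 * Real.cos (2 * π * k * v)|
      ≤ min (d:ℝ) (1 / (2 * min v (1 - v))) := le_min h1 (h2.trans h3)
  have h5 : min (d:ℝ) (1 / (2 * min v (1 - v)))
      ≤ min (d:ℝ) (1 / (2 * v)) + min (d:ℝ) (1 / (2 * (1 - v))) := by
    rcases min_cases v (1 - v) with ⟨he, _⟩ | ⟨he, _⟩
    · rw [he]; linarith
    · rw [he]; linarith
  unfold Bfun
  linarith

lemma phiStar_nonneg (d : ℕ) (v : ℝ) (hv : v ≤ 1) : 0 ≤ PhiStar d v := by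
  have hmem : (fun t => |∑ j ∈ Finset.Icc 1 d, Tr j t * Tr j (t - v)|) v
      ∈ (fun t => |∑ j ∈ Finset.Icc 1 d, Tr j t * Tr j (t - v)|) '' Set.Icc v 1 :=
    Set.mem_image_of_mem _ (Set.mem_Icc.mpr ⟨le_refl v, hv⟩)
  have hbdd : BddAbove ((fun t => |∑ j ∈ Finset.Icc 1 d, Tr j t * Tr j (t - v)|) '' Set.Icc v 1) := by
    refine ⟨2 * d, ?_⟩
    rintro x ⟨t, _, rfl⟩
    exact sum_abs_le d t v
  exact le_trans (abs_nonneg _) (le_csSup hbdd hmem)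

lemma m1_meas (d : ℕ) : Measurable fun v : ℝ => min (d:ℝ) (1 / (2 * v)) := by
  have h : Measurable fun v : ℝ => (2 * v)⁻¹ := (measurable_const.mul measurable_id).inv
  simpa [one_div] using measurable_const.min h

lemma m1_intInt (d : ℕ) (a b : ℝ) (ha : 0 ≤ a) (hab : a ≤ b) :
    IntervalIntegrable (fun v => min (d:ℝ) (1 / (2 * v))) volume a b := by
  rw [intervalIntegrable_iff_integrableOn_Ioc_of_le hab]
  refine Integrable.mono' (integrable_const (d:ℝ)) ((m1_meas d).aestronglyMeasurable.restrict) ?_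
  refine (ae_restrict_iff' measurableSet_Ioc).2 (Filter.Eventually.of_forall fun v hv => ?_)
  have hv0 : 0 < v := lt_of_le_of_lt ha hv.1
  have h1 : (0:ℝ) ≤ 1 / (2 * v) := by positivity
  rw [Real.norm_eq_abs, abs_of_nonneg (le_min (by positivity) h1)]
  exact min_le_left _ _

lemma m2_intInt (d : ℕ) :
    IntervalIntegrable (fun v => min (d:ℝ) (1 / (2 * (1 - v)))) volume 0 1 := by
  have h := ((m1_intInt d 0 1 le_rfl zero_le_one).comp_sub_left 1).symm
  have e1 : (1:ℝ) - 1 = 0 := by norm_num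
  have e2 : (1:ℝ) - 0 = 1 := by norm_num
  rw [e1, e2] at h
  exact h

lemma m1_integral (d : ℕ) (hd : 3 ≤ d) :
    ∫ v in (0:ℝ)..1, min (d:ℝ) (1 / (2 * v)) ≤ 1/2 + 1/2 * Real.log (2 * d) := by
  have hd0 : (0:ℝ) < d := by positivity
  set a : ℝ := 1 / (2 * d) with ha_def
  have ha0 : 0 < a := by positivity
  have ha1 : a ≤ 1 := by
    rw [ha_def, div_le_one (by positivity)]
    have : (3:ℝ) ≤ d := by exact_mod_cast hd
    linarith
  rw [← intervalIntegral.integral_add_adjacent_intervals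
    (m1_intInt d 0 a le_rfl ha0.le) (m1_intInt d a 1 ha0.le ha1)]
  have hI1 : ∫ v in (0:ℝ)..a, min (d:ℝ) (1 / (2 * v)) ≤ 1/2 := by
    calc ∫ v in (0:ℝ)..a, min (d:ℝ) (1 / (2 * v))
        ≤ ∫ _v in (0:ℝ)..a, (d:ℝ) :=
          intervalIntegral.integral_mono_on ha0.le (m1_intInt d 0 a le_rfl ha0.le)
            intervalIntegrable_const (fun x _ => min_le_left _ _)
      _ = a * d := by simp [smul_eq_mul]
      _ = 1/2 := by rw [ha_def]; field_simp
  have hcont : ContinuousOn (fun v : ℝ => 1 / (2 * v)) (Set.uIcc a 1) := by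
    apply ContinuousOn.div continuousOn_const (continuousOn_const.mul continuousOn_id)
    intro x hx
    rw [Set.uIcc_of_le ha1] at hx
    have : 0 < x := lt_of_lt_of_le ha0 hx.1
    show (2:ℝ) * x ≠ 0
    positivity
  have hI2 : ∫ v in a..1, min (d:ℝ) (1 / (2 * v)) ≤ 1/2 * Real.log (2 * d) := by
    calc ∫ v in a..1, min (d:ℝ) (1 / (2 * v))
        ≤ ∫ v in a..1, 1 / (2 * v) :=
          intervalIntegral.integral_mono_on ha1 (m1_intInt d a 1 ha0.le ha1)
            hcont.intervalIntegrable (fun x _ => min_le_right _ _)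
      _ = ∫ v in a..1, (1/2) * (1 / v) := by
          congr 1; ext v; rw [one_div, mul_inv]; ring
      _ = (1/2) * ∫ v in a..1, 1 / v := intervalIntegral.integral_const_mul _ _
      _ = (1/2) * Real.log (1 / a) := by
          rw [integral_one_div (by
            rw [Set.uIcc_of_le ha1, Set.mem_Icc]; push_neg; intro h; linarith)]
      _ = 1/2 * Real.log (2 * d) := by rw [ha_def, one_div_one_div]
  linarith

lemma m2_integral_eq (d : ℕ) :
    ∫ v in (0:ℝ)..1, min (d:ℝ) (1 / (2 * (1 - v)))
      = ∫ v in (0:ℝ)..1, min (d:ℝ) (1 / (2 * v)) := by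
  have h := intervalIntegral.integral_comp_sub_left
    (f := fun v => min (d:ℝ) (1 / (2 * v))) (a := 0) (b := 1) 1
  have e1 : (1:ℝ) - 1 = 0 := by norm_num
  have e2 : (1:ℝ) - 0 = 1 := by norm_num
  rw [e1, e2] at h
  exact h

lemma Bfun_intInt (d : ℕ) : IntervalIntegrable (Bfun d) volume 0 1 := by
  have : Bfun d = fun v => ((2:ℝ) + min (d:ℝ) (1 / (2 * v))) + min (d:ℝ) (1 / (2 * (1 - v))) := by
    funext v; simp [Bfun]
  rw [this]
  exact (intervalIntegrable_const.add (m1_intInt d 0 1 le_rfl zero_le_one)).add (m2_intInt d)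

lemma Bfun_integral (d : ℕ) (hd : 3 ≤ d) :
    ∫ v in (0:ℝ)..1, Bfun d v ≤ 5 + Real.log d := by
  have hd0 : (d:ℝ) ≠ 0 := by positivity
  have h1 : ∫ v in (0:ℝ)..1, Bfun d v
      = (∫ v in (0:ℝ)..1, ((2:ℝ) + min (d:ℝ) (1 / (2 * v))))
        + ∫ v in (0:ℝ)..1, min (d:ℝ) (1 / (2 * (1 - v))) := by
    rw [← intervalIntegral.integral_add
      (intervalIntegrable_const.add (m1_intInt d 0 1 le_rfl zero_le_one)) (m2_intInt d)]
    rfl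
  have h2 : ∫ v in (0:ℝ)..1, ((2:ℝ) + min (d:ℝ) (1 / (2 * v)))
      = 2 + ∫ v in (0:ℝ)..1, min (d:ℝ) (1 / (2 * v)) := by
    rw [intervalIntegral.integral_add intervalIntegrable_const
      (m1_intInt d 0 1 le_rfl zero_le_one)]
    norm_num
  have h3 := m1_integral d hd
  have h4 := m2_integral_eq d
  have h5 : Real.log (2 * d) = Real.log 2 + Real.log d := Real.log_mul two_ne_zero hd0
  have h6 : Real.log 2 < 1 := by
    have := Real.log_two_lt_d9; linarith
  rw [h1, h2, h4]
  linarith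

/-- For every `d ≥ 3`, `∫_0^1 Φ*_d(v) dv ≤ 5 + ln d`. -/
theorem trig_kernel_bound (d : ℕ) (hd : 3 ≤ d) :
    ∫ v in (0:ℝ)..1, PhiStar d v ≤ 5 + Real.log d := by
  have hB : Integrable (Bfun d) (volume.restrict (Set.Ioc (0:ℝ) 1)) :=
    (intervalIntegrable_iff_integrableOn_Ioc_of_le zero_le_one).mp (Bfun_intInt d)
  have hne : ∀ᵐ v : ℝ, v ≠ (1:ℝ) := by
    rw [ae_iff]
    simp only [ne_eq, not_not, Set.setOf_eq_eq_singleton]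
    exact Real.volume_singleton
  have hmem : ∀ᵐ v ∂(volume.restrict (Set.Ioc (0:ℝ) 1)), v ∈ Set.Ioc (0:ℝ) 1 :=
    ae_restrict_mem measurableSet_Ioc
  have hf : 0 ≤ᵐ[volume.restrict (Set.Ioc (0:ℝ) 1)] PhiStar d := by
    filter_upwards [hmem] with v hv
    exact phiStar_nonneg d v hv.2
  have hle : PhiStar d ≤ᵐ[volume.restrict (Set.Ioc (0:ℝ) 1)] Bfun d := by
    filter_upwards [hmem, ae_restrict_of_ae hne] with v hv hv1
    exact phiStar_le d hd v ⟨hv.1, lt_of_le_of_ne hv.2 hv1⟩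
  have key := integral_mono_of_nonneg hf hB hle
  rw [intervalIntegral.integral_of_le zero_le_one]
  calc ∫ v in Set.Ioc (0:ℝ) 1, PhiStar d v ≤ ∫ v in Set.Ioc (0:ℝ) 1, Bfun d v := key
    _ = ∫ v in (0:ℝ)..1, Bfun d v := (intervalIntegral.integral_of_le zero_le_one).symm
    _ ≤ 5 + Real.log d := Bfun_integral d hd
end

section
/- Let v be a continuously differentiable function on [0, t] and h an integrable function on [0, t]. Then for any α > 0, |∫_0^t e^{−α(t−s)} h(s) v(s) ds| ≤ (sup_{0≤s≤t} |H(s)|) · (2 sup_{0≤s≤t} |v(s)| + (1/α) sup_{0≤s≤t} |v'(s)|), where H(s) = ∫_0^s h(u) du. -/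
open MeasureTheory Real

private lemma biSup_abs_spec' {f : ℝ → ℝ} {a b : ℝ} (hab : a ≤ b)
    (hbd : ∃ M, ∀ s ∈ Set.Icc a b, |f s| ≤ M) :
    0 ≤ (⨆ s ∈ Set.Icc a b, |f s|) ∧
      ∀ s ∈ Set.Icc a b, |f s| ≤ ⨆ s ∈ Set.Icc a b, |f s| := by
  obtain ⟨M, hM⟩ := hbd
  have hbdd : BddAbove (Set.range fun s => ⨆ _ : s ∈ Set.Icc a b, |f s|) := by
    refine ⟨max M 0, ?_⟩
    rintro x ⟨s, rfl⟩
    show (⨆ _ : s ∈ Set.Icc a b, |f s|) ≤ max M 0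
    by_cases hs : s ∈ Set.Icc a b
    · rw [ciSup_pos hs]
      exact le_max_of_le_left (hM s hs)
    · haveI : IsEmpty (s ∈ Set.Icc a b) := ⟨hs⟩
      rw [iSup_of_empty', Real.sSup_empty]
      exact le_max_right _ _
  have key : ∀ s ∈ Set.Icc a b, |f s| ≤ ⨆ s ∈ Set.Icc a b, |f s| := by
    intro s hs
    have h2 := le_ciSup hbdd s
    rwa [ciSup_pos hs] at h2
  exact ⟨le_trans (abs_nonneg _) (key a ⟨le_refl a, hab⟩), key⟩

private lemma fubini_step' (t : ℝ) (h G : ℝ → ℝ)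
    (hh : IntegrableOn h (Set.Ioc 0 t)) (hG : Continuous G) :
    ∫ s in Set.Ioc (0:ℝ) t, h s * (∫ u in s..t, G u) =
      ∫ u in Set.Ioc (0:ℝ) t, (∫ x in (0:ℝ)..u, h x) * G u := by
  set μ := volume.restrict (Set.Ioc (0:ℝ) t) with hμ
  set F : ℝ × ℝ → ℝ :=
    fun p => Set.indicator {q : ℝ × ℝ | q.1 < q.2} (fun q => h q.1 * G q.2) p with hF
  have hGint : IntegrableOn G (Set.Ioc 0 t) := hG.integrableOn_Ioc
  have hFint : Integrable F (μ.prod μ) := by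
    apply Integrable.indicator
    · exact hh.mul_prod hGint
    · exact measurableSet_lt measurable_fst measurable_snd
  have hswap := MeasureTheory.integral_integral_swap (f := fun s u => F (s, u))
    (μ := μ) (ν := μ) hFint
  have L : ∀ s ∈ Set.Ioc (0:ℝ) t, (∫ u, F (s, u) ∂μ) = h s * ∫ u in s..t, G u := by
    intro s hs
    have e1 : (fun u => F (s, u)) = (Set.Ioi s).indicator (fun u => h s * G u) := by
      funext u; by_cases hu : s < u <;> simp [hF, Set.indicator, hu]
    have e2 : Set.Ioi s ∩ Set.Ioc 0 t = Set.Ioc s t := by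
      ext x; constructor
      · rintro ⟨h1, h2, h3⟩; exact ⟨h1, h3⟩
      · rintro ⟨h1, h2⟩; exact ⟨h1, lt_trans hs.1 h1, h2⟩
    rw [e1, hμ, integral_indicator measurableSet_Ioi,
      Measure.restrict_restrict measurableSet_Ioi, e2, integral_const_mul,
      intervalIntegral.integral_of_le hs.2]
  have R : ∀ u ∈ Set.Ioc (0:ℝ) t, (∫ s, F (s, u) ∂μ) = (∫ x in (0:ℝ)..u, h x) * G u := by
    intro u hu
    have e1 : (fun s => F (s, u)) = (Set.Iio u).indicator (fun s => h s * G u) := by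
      funext s; by_cases hsu : s < u <;> simp [hF, Set.indicator, hsu]
    have e2 : Set.Iio u ∩ Set.Ioc 0 t = Set.Ioo 0 u := by
      ext x; constructor
      · rintro ⟨h1, h2, h3⟩; exact ⟨h2, h1⟩
      · rintro ⟨h1, h2⟩; exact ⟨h2, h1, le_trans (le_of_lt h2) hu.2⟩
    rw [e1, hμ, integral_indicator measurableSet_Iio,
      Measure.restrict_restrict measurableSet_Iio, e2, integral_mul_const,
      ← MeasureTheory.integral_Ioc_eq_integral_Ioo,
      ← intervalIntegral.integral_of_le (le_of_lt hu.1)]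
  calc ∫ s in Set.Ioc (0:ℝ) t, h s * (∫ u in s..t, G u)
      = ∫ s, (∫ u, F (s, u) ∂μ) ∂μ :=
        (setIntegral_congr_fun measurableSet_Ioc (fun s hs => (L s hs).symm))
    _ = ∫ u, (∫ s, F (s, u) ∂μ) ∂μ := hswap
    _ = ∫ u in Set.Ioc (0:ℝ) t, (∫ x in (0:ℝ)..u, h x) * G u :=
        (setIntegral_congr_fun measurableSet_Ioc (fun u hu => R u hu))


/-- Integration-by-parts bound: if `v` is continuously differentiable (with derivative `v'`)
and `h` is integrable on `[0,t]`, then for any `α > 0`,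
`|∫_0^t e^{−α(t−s)} h(s) v(s) ds| ≤ sup_{[0,t]}|H| · (2 sup_{[0,t]}|v| + α⁻¹ sup_{[0,t]}|v'|)`,
where `H(s) = ∫_0^s h(u) du`. -/
theorem exp_weighted_integral_bound (t α : ℝ) (ht : 0 ≤ t) (hα : 0 < α)
    (h v v' : ℝ → ℝ)
    (hh : IntervalIntegrable h volume 0 t)
    (hv : ∀ x, HasDerivAt v (v' x) x) (hv' : Continuous v') :
    |∫ s in (0:ℝ)..t, Real.exp (-α * (t - s)) * h s * v s|
      ≤ (⨆ s ∈ Set.Icc (0:ℝ) t, |∫ u in (0:ℝ)..s, h u|) *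
        (2 * (⨆ s ∈ Set.Icc (0:ℝ) t, |v s|) + (1 / α) * ⨆ s ∈ Set.Icc (0:ℝ) t, |v' s|) := by
  have hvc : Continuous v := Differentiable.continuous (fun x => (hv x).differentiableAt)
  set g : ℝ → ℝ := fun s => Real.exp (-α * (t - s)) * v s with hgdef
  set G : ℝ → ℝ := fun s => Real.exp (-α * (t - s)) * (α * v s + v' s) with hGdef
  set H : ℝ → ℝ := fun s => ∫ u in (0:ℝ)..s, h u with hHdef
  have hexp : ∀ s : ℝ, HasDerivAt (fun u => Real.exp (-α * (t - u)))
      (α * Real.exp (-α * (t - s))) s := by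
    intro s
    have h1 : HasDerivAt (fun u : ℝ => -α * (t - u)) α s := by
      simpa using ((hasDerivAt_id s).const_sub t).const_mul (-α)
    simpa [mul_comm] using h1.exp
  have hgd : ∀ s, HasDerivAt g (G s) s := by
    intro s
    have h2 := (hexp s).mul (hv s)
    refine h2.congr_deriv ?_
    simp [hGdef]; ring
  have hGc : Continuous G := by
    have he : Continuous fun s => Real.exp (-α * (t - s)) := by fun_prop
    exact he.mul ((continuous_const.mul hvc).add hv')
  have hgc : Continuous g := by fun_prop
  have hftc : ∀ s : ℝ, ∫ u in s..t, G u = g t - g s := fun s =>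
    intervalIntegral.integral_eq_sub_of_hasDerivAt (fun x _ => (hgd x))
      (hGc.intervalIntegrable _ _)
  -- suprema
  set MH := ⨆ s ∈ Set.Icc (0:ℝ) t, |H s| with hMHdef
  set Mv := ⨆ s ∈ Set.Icc (0:ℝ) t, |v s| with hMvdef
  set Mv' := ⨆ s ∈ Set.Icc (0:ℝ) t, |v' s| with hMv'def
  have hHcont : ContinuousOn H (Set.Icc 0 t) := by
    have := intervalIntegral.continuousOn_primitive_interval' hh
      (Set.left_mem_uIcc (a := (0:ℝ)) (b := t))
    rwa [Set.uIcc_of_le ht] at this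
  have bH := biSup_abs_spec' (f := H) ht (by
    obtain ⟨C, hC⟩ := (isCompact_Icc).exists_bound_of_continuousOn hHcont
    exact ⟨C, fun s hs => by simpa [Real.norm_eq_abs] using hC s hs⟩)
  have bv := biSup_abs_spec' (f := v) ht (by
    obtain ⟨C, hC⟩ := (isCompact_Icc).exists_bound_of_continuousOn hvc.continuousOn
    exact ⟨C, fun s hs => by simpa [Real.norm_eq_abs] using hC s hs⟩)
  have bv' := biSup_abs_spec' (f := v') ht (by
    obtain ⟨C, hC⟩ := (isCompact_Icc).exists_bound_of_continuousOn hv'.continuousOn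
    exact ⟨C, fun s hs => by simpa [Real.norm_eq_abs] using hC s hs⟩)
  -- the key identity
  have hHG : ∫ s in Set.Ioc (0:ℝ) t, h s * (g t - g s) =
      ∫ u in Set.Ioc (0:ℝ) t, H u * G u := by
    have h5 := fubini_step' t h G hh.1 hGc
    simp only [hftc] at h5
    exact h5
  have hhg_int : IntegrableOn (fun s => h s * g s) (Set.Ioc 0 t) :=
    (hh.mul_continuousOn hgc.continuousOn).1
  have hh_int : IntegrableOn h (Set.Ioc 0 t) := hh.1
  have hsplit : ∫ s in Set.Ioc (0:ℝ) t, h s * (g t - g s) =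
      H t * g t - ∫ s in Set.Ioc (0:ℝ) t, h s * g s := by
    have e : ∀ s, h s * (g t - g s) = h s * g t - h s * g s := fun s => by ring
    simp_rw [e]
    rw [integral_sub (hh_int.mul_const _) hhg_int, integral_mul_const]
    have hHt : H t = ∫ a in Set.Ioc (0:ℝ) t, h a := intervalIntegral.integral_of_le ht
    rw [hHt]
  have hIeq : (∫ s in (0:ℝ)..t, Real.exp (-α * (t - s)) * h s * v s) =
      H t * g t - ∫ u in Set.Ioc (0:ℝ) t, H u * G u := by
    rw [← hHG, hsplit, sub_sub_cancel, intervalIntegral.integral_of_le ht]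
    refine setIntegral_congr_fun measurableSet_Ioc (fun s _ => ?_)
    show Real.exp (-α * (t - s)) * h s * v s = h s * g s
    simp only [hgdef]; ring
  -- bound the tail integral
  have hexp_int : ∫ u in (0:ℝ)..t, Real.exp (-α * (t - u)) = α⁻¹ - α⁻¹ * Real.exp (-α * t) := by
    have hF : ∀ u : ℝ, HasDerivAt (fun u => α⁻¹ * Real.exp (-α * (t - u)))
        (Real.exp (-α * (t - u))) u := by
      intro u
      have := (hexp u).const_mul α⁻¹
      refine this.congr_deriv ?_
      field_simp
    rw [intervalIntegral.integral_eq_sub_of_hasDerivAt (fun x _ => hF x)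
      (((by fun_prop : Continuous fun u => Real.exp (-α * (t - u))).intervalIntegrable) _ _)]
    simp [mul_comm]
  have hCnn : 0 ≤ MH * (α * Mv + Mv') := by
    have := bH.1; have := bv.1; have := bv'.1
    positivity
  have htail : |∫ u in Set.Ioc (0:ℝ) t, H u * G u| ≤ MH * (α * Mv + Mv') * α⁻¹ := by
    have hbound : ∀ u ∈ Set.Ioc (0:ℝ) t,
        |H u * G u| ≤ MH * (α * Mv + Mv') * Real.exp (-α * (t - u)) := by
      intro u hu
      have hu' : u ∈ Set.Icc (0:ℝ) t := ⟨le_of_lt hu.1, hu.2⟩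
      have h1 : |H u| ≤ MH := bH.2 u hu'
      have h2 : |v u| ≤ Mv := bv.2 u hu'
      have h3 : |v' u| ≤ Mv' := bv'.2 u hu'
      have h4 : |G u| ≤ Real.exp (-α * (t - u)) * (α * Mv + Mv') := by
        rw [hGdef]
        simp only
        rw [abs_mul, abs_of_pos (Real.exp_pos _)]
        refine mul_le_mul_of_nonneg_left ?_ (le_of_lt (Real.exp_pos _))
        calc |α * v u + v' u| ≤ |α * v u| + |v' u| := abs_add_le _ _
          _ = α * |v u| + |v' u| := by rw [abs_mul, abs_of_pos hα]
          _ ≤ α * Mv + Mv' := by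
              gcongr
      rw [abs_mul]
      calc |H u| * |G u| ≤ MH * (Real.exp (-α * (t - u)) * (α * Mv + Mv')) :=
            mul_le_mul h1 h4 (abs_nonneg _) bH.1
        _ = MH * (α * Mv + Mv') * Real.exp (-α * (t - u)) := by ring
    have hint1 : IntegrableOn (fun u => |H u * G u|) (Set.Ioc 0 t) := by
      have : IntegrableOn (fun u => H u * G u) (Set.Ioc 0 t) :=
        IntegrableOn.mono_set
          ((hHcont.mul hGc.continuousOn).integrableOn_Icc) Set.Ioc_subset_Icc_self
      exact this.abs
    have hint2 : IntegrableOn (fun u => MH * (α * Mv + Mv') * Real.exp (-α * (t - u)))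
        (Set.Ioc 0 t) := by
      apply Continuous.integrableOn_Ioc; fun_prop
    calc |∫ u in Set.Ioc (0:ℝ) t, H u * G u|
        ≤ ∫ u in Set.Ioc (0:ℝ) t, |H u * G u| := by
          simpa only [Real.norm_eq_abs] using
            norm_integral_le_integral_norm (μ := volume.restrict (Set.Ioc (0:ℝ) t))
              (f := fun u => H u * G u)
      _ ≤ ∫ u in Set.Ioc (0:ℝ) t, MH * (α * Mv + Mv') * Real.exp (-α * (t - u)) :=
          setIntegral_mono_on hint1 hint2 measurableSet_Ioc hbound
      _ = MH * (α * Mv + Mv') * (α⁻¹ - α⁻¹ * Real.exp (-α * t)) := by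
          rw [integral_const_mul, ← intervalIntegral.integral_of_le ht, hexp_int]
      _ ≤ MH * (α * Mv + Mv') * α⁻¹ := by
          apply mul_le_mul_of_nonneg_left _ hCnn
          have := Real.exp_pos (-α * t)
          have hαi : 0 < α⁻¹ := inv_pos.mpr hα
          nlinarith
  -- head term
  have hhead : |H t * g t| ≤ MH * Mv := by
    have hgt : g t = v t := by simp [hgdef]
    rw [abs_mul, hgt]
    exact mul_le_mul (bH.2 t ⟨ht, le_refl t⟩) (bv.2 t ⟨ht, le_refl t⟩) (abs_nonneg _) bH.1
  rw [hIeq]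
  calc |H t * g t - ∫ u in Set.Ioc (0:ℝ) t, H u * G u|
      ≤ |H t * g t| + |∫ u in Set.Ioc (0:ℝ) t, H u * G u| := abs_sub _ _
    _ ≤ MH * Mv + MH * (α * Mv + Mv') * α⁻¹ := add_le_add hhead htail
    _ ≤ MH * (2 * Mv + (1 / α) * Mv') := by
        have hne : α ≠ 0 := ne_of_gt hα
        have e : MH * Mv + MH * (α * Mv + Mv') * α⁻¹ = MH * (2 * Mv + (1 / α) * Mv') := by
          field_simp; ring
        exact le_of_eq e
end

section
/- Let a ≤ 0, σ > 0, and ξ satisfy the covariance identity E I_n(f)² = σ ∫_0^n (f²(t) + 2 ξ̌_t(f) f(t)) dt with ξ̌_t(f) = a ∫_0^t e^{a(t−s)} f(s)(1+e^{2as})/2 ds. Then for any cadlag f ∈ L²[0,n], E I_n(f)² ≤ 2σ ∫_0^n f²(s) ds. -/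
open MeasureTheory Real

lemma intOnIoc {u v : ℝ} {φ : ℝ → ℝ} (hφ : Measurable φ) {C : ℝ}
    (hC : ∀ x ∈ Set.Ioc u v, |φ x| ≤ C) : IntegrableOn φ (Set.Ioc u v) := by
  refine Integrable.mono' (integrable_const C) hφ.aestronglyMeasurable ?_
  filter_upwards [ae_restrict_mem measurableSet_Ioc] with x hx
  simpa [Real.norm_eq_abs] using hC x hx

lemma triangle_swap {v w : ℝ} (F : ℝ → ℝ → ℝ) (hF : Measurable (Function.uncurry F)) (C : ℝ)
    (hC : ∀ s ∈ Set.Ioc v w, ∀ t ∈ Set.Ioc v w, |F s t| ≤ C) :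
    ∫ t in Set.Ioc v w, ∫ s in Set.Ioc v t, F s t =
      ∫ s in Set.Ioc v w, ∫ t in Set.Ioc s w, F s t := by
  set μ := volume.restrict (Set.Ioc v w) with hμ
  have hmeasG : Measurable (fun p : ℝ × ℝ => if p.2 ≤ p.1 then F p.2 p.1 else 0) := by
    exact Measurable.ite (measurableSet_le measurable_snd measurable_fst)
      (hF.comp measurable_swap) measurable_const
  have hInt : Integrable (fun p : ℝ × ℝ => if p.2 ≤ p.1 then F p.2 p.1 else 0) (μ.prod μ) := by
    refine Integrable.mono' (integrable_const C) hmeasG.aestronglyMeasurable ?_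
    rw [hμ, Measure.prod_restrict]
    filter_upwards [ae_restrict_mem (measurableSet_Ioc.prod measurableSet_Ioc)] with p hp
    rcases hp with ⟨hp1, hp2⟩
    have h0 : |F p.2 p.1| ≤ C := hC p.2 hp2 p.1 hp1
    rw [Real.norm_eq_abs]
    split_ifs
    · exact h0
    · simpa using le_trans (abs_nonneg _) h0
  have step1 : ∀ t ∈ Set.Ioc v w,
      (∫ s in Set.Ioc v t, F s t) = ∫ s, (if s ≤ t then F s t else 0) ∂μ := by
    intro t ht
    have : (fun s => if s ≤ t then F s t else 0) = Set.indicator (Set.Iic t) (fun s => F s t) := by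
      ext s; simp [Set.indicator_apply, Set.mem_Iic]
    rw [hμ, this, setIntegral_indicator measurableSet_Iic]
    congr 1
    rw [Set.Ioc_inter_Iic, min_eq_right ht.2]
  have step2 : ∀ s ∈ Set.Ioc v w,
      (∫ t, (if s ≤ t then F s t else 0) ∂μ) = ∫ t in Set.Ioc s w, F s t := by
    intro s hs
    have : (fun t => if s ≤ t then F s t else 0) = Set.indicator (Set.Ici s) (fun t => F s t) := by
      ext t; simp [Set.indicator_apply, Set.mem_Ici]
    rw [hμ, this, setIntegral_indicator measurableSet_Ici]
    have hset : Set.Ioc v w ∩ Set.Ici s = Set.Icc s w := by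
      ext x
      simp only [Set.mem_inter_iff, Set.mem_Ioc, Set.mem_Ici, Set.mem_Icc]
      constructor
      · rintro ⟨⟨_, h2⟩, h3⟩; exact ⟨h3, h2⟩
      · rintro ⟨h1, h2⟩; exact ⟨⟨lt_of_lt_of_le hs.1 h1, h2⟩, h1⟩
    rw [hset, integral_Icc_eq_integral_Ioc]
  calc ∫ t in Set.Ioc v w, ∫ s in Set.Ioc v t, F s t
      = ∫ t, ∫ s, (if s ≤ t then F s t else 0) ∂μ ∂μ := by
        rw [hμ]; exact setIntegral_congr_fun measurableSet_Ioc (fun t ht => step1 t ht)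
    _ = ∫ s, ∫ t, (if s ≤ t then F s t else 0) ∂μ ∂μ := by
        exact integral_integral_swap hInt
    _ = ∫ s in Set.Ioc v w, ∫ t in Set.Ioc s w, F s t := by
        rw [hμ]; exact setIntegral_congr_fun measurableSet_Ioc (fun s hs => step2 s hs)

lemma symm_sq {v w : ℝ} (hvw : v ≤ w) {g : ℝ → ℝ} (hg : Measurable g)
    (hii : ∀ x y : ℝ, IntervalIntegrable g volume x y) {C : ℝ}
    (hC : ∀ x ∈ Set.Ioc v w, |g x| ≤ C) :
    ∫ t in Set.Ioc v w, (∫ s in Set.Ioc v t, g s) * g t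
      = (∫ s in Set.Ioc v w, g s) ^ 2 / 2 := by
  rcases eq_or_lt_of_le hvw with h | hvw'
  · subst h; simp
  have hC0 : 0 ≤ C := le_trans (abs_nonneg _) (hC w ⟨hvw', le_refl w⟩)
  set GG : ℝ → ℝ := fun t => ∫ s in v..t, g s with hGG
  have hGGcont : Continuous GG := intervalIntegral.continuous_primitive hii v
  have hGGbd : ∀ t ∈ Set.Ioc v w, |GG t| ≤ C * (w - v) := by
    intro t ht
    have h1 : ‖∫ s in v..t, g s‖ ≤ C * |t - v| := by
      apply intervalIntegral.norm_integral_le_of_norm_le_const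
      intro x hx
      rw [Set.uIoc_of_le ht.1.le] at hx
      exact (Real.norm_eq_abs _) ▸ hC x ⟨hx.1, le_trans hx.2 ht.2⟩
    rw [Real.norm_eq_abs] at h1
    refine le_trans h1 ?_
    rw [abs_of_nonneg (by linarith [ht.1.le] : (0:ℝ) ≤ t - v)]
    have := ht.2
    nlinarith
  have hIocGG : ∀ t, v ≤ t → (∫ s in Set.Ioc v t, g s) = GG t := fun t ht =>
    (intervalIntegral.integral_of_le ht).symm
  have hIocGG2 : ∀ s ∈ Set.Ioc v w, (∫ t in Set.Ioc s w, g t) = GG w - GG s := by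
    intro s hs
    rw [← intervalIntegral.integral_of_le hs.2]
    have := intervalIntegral.integral_add_adjacent_intervals (hii v s) (hii s w)
    rw [hGG]; linarith [this]
  set c : ℝ := GG w with hc
  set P : ℝ := ∫ t in Set.Ioc v w, (∫ s in Set.Ioc v t, g s) * g t with hP
  have hPQ : P = ∫ s in Set.Ioc v w, g s * (GG w - GG s) := by
    rw [hP]
    have hsw := triangle_swap (fun s t => g s * g t) ((hg.comp measurable_fst).mul (hg.comp measurable_snd)) (C * C)
      (by
        intro s hs t ht
        rw [abs_mul]
        exact mul_le_mul (hC s hs) (hC t ht) (abs_nonneg _) hC0)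
    have l1 : ∫ t in Set.Ioc v w, (∫ s in Set.Ioc v t, g s) * g t
        = ∫ t in Set.Ioc v w, ∫ s in Set.Ioc v t, g s * g t := by
      refine setIntegral_congr_fun measurableSet_Ioc (fun t ht => ?_)
      rw [integral_mul_const]
    have l2 : ∫ s in Set.Ioc v w, ∫ t in Set.Ioc s w, g s * g t
        = ∫ s in Set.Ioc v w, g s * (GG w - GG s) := by
      refine setIntegral_congr_fun measurableSet_Ioc (fun s hs => ?_)
      rw [MeasureTheory.integral_const_mul, hIocGG2 s hs]
    rw [l1, hsw, l2]
  have hPform : P = ∫ t in Set.Ioc v w, GG t * g t := by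
    rw [hP]
    exact setIntegral_congr_fun measurableSet_Ioc (fun t ht => by rw [hIocGG t ht.1.le])
  have hI1 : IntegrableOn (fun t => GG t * g t) (Set.Ioc v w) := by
    refine intOnIoc (hGGcont.measurable.mul hg) (C := C * (w - v) * C) ?_
    intro t ht
    rw [abs_mul]
    exact mul_le_mul (hGGbd t ht) (hC t ht) (abs_nonneg _) (by nlinarith)
  have hI2 : IntegrableOn (fun t => g t * (GG w - GG t)) (Set.Ioc v w) := by
    refine intOnIoc (hg.mul (measurable_const.sub hGGcont.measurable))
      (C := C * (C * (w - v) + C * (w - v))) ?_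
    intro t ht
    rw [abs_mul]
    refine mul_le_mul (hC t ht) ?_ (abs_nonneg _) hC0
    refine le_trans (abs_sub _ _) ?_
    exact add_le_add (hGGbd w ⟨hvw', le_refl w⟩) (hGGbd t ht)
  have hsum : P + P = c * c := by
    nth_rewrite 1 [hPform]
    nth_rewrite 1 [hPQ]
    rw [← integral_add hI1 hI2]
    have : ∫ t in Set.Ioc v w, (GG t * g t + g t * (GG w - GG t))
        = ∫ t in Set.Ioc v w, GG w * g t := by
      refine setIntegral_congr_fun measurableSet_Ioc (fun t _ => ?_)
      ring
    rw [this, MeasureTheory.integral_const_mul, hc, ← hIocGG w hvw]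
  have hgoal : (∫ s in Set.Ioc v w, g s) = c := hIocGG w hvw
  rw [hgoal]
  nlinarith [hsum]

lemma exp_ftc (c s : ℝ) : ∫ u in (0:ℝ)..s, c * Real.exp (c*u) = Real.exp (c*s) - 1 := by
  have hd : ∀ u : ℝ, HasDerivAt (fun x => Real.exp (c*x)) (c * Real.exp (c*u)) u := by
    intro u
    have h1 : HasDerivAt (fun x : ℝ => c*x) c u := by
      simpa using (hasDerivAt_id u).const_mul c
    simpa [mul_comm] using h1.exp
  rw [intervalIntegral.integral_eq_sub_of_hasDerivAt (fun u _ => hd u)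
    (Continuous.intervalIntegrable (by continuity) 0 s)]
  simp

lemma psi_f_ii {f : ℝ → ℝ} (hmeas : Measurable f) {C : ℝ} (hC : ∀ x, |f x| ≤ C)
    (ψ : ℝ → ℝ) (hψ : Continuous ψ) (x y : ℝ) :
    IntervalIntegrable (fun s => ψ s * f s) volume x y := by
  obtain ⟨D, hD⟩ := (isCompact_uIcc (a := x) (b := y)).exists_bound_of_continuousOn
    hψ.continuousOn
  rw [intervalIntegrable_iff, Set.uIoc]
  refine Integrable.mono' (integrable_const (D * C)) ((hψ.measurable.mul hmeas).aestronglyMeasurable) ?_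
  filter_upwards [ae_restrict_mem measurableSet_Ioc] with s hs
  have hsI : s ∈ Set.uIcc x y := by rw [Set.uIcc]; exact Set.Ioc_subset_Icc_self hs
  have hD' : |ψ s| ≤ D := by simpa [Real.norm_eq_abs] using hD s hsI
  rw [Real.norm_eq_abs, abs_mul]
  exact mul_le_mul hD' (hC s) (abs_nonneg _) (le_trans (abs_nonneg _) hD')

noncomputable def gfun (a : ℝ) (f : ℝ → ℝ) : ℝ → ℝ := fun s => Real.exp (a*s) * f s
noncomputable def pfun (a : ℝ) (f : ℝ → ℝ) : ℝ → ℝ := fun s => Real.exp (-(a*s)) * f s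
noncomputable def qfun (a : ℝ) (f : ℝ → ℝ) : ℝ → ℝ :=
  fun s => ((Real.exp (-(2*a)*s) - 1) * Real.exp (a*s)) * f s
noncomputable def Gfun (a : ℝ) (f : ℝ → ℝ) : ℝ → ℝ := fun t => ∫ s in (0:ℝ)..t, gfun a f s
noncomputable def Kfun (a : ℝ) (f : ℝ → ℝ) : ℝ → ℝ := fun t => ∫ s in (0:ℝ)..t, pfun a f s
noncomputable def Qfun (a : ℝ) (f : ℝ → ℝ) : ℝ → ℝ := fun t => ∫ s in (0:ℝ)..t, qfun a f s
noncomputable def hfun (a : ℝ) : ℝ → ℝ := fun u => (-(2*a)) * Real.exp (-(2*a)*u)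

section aux
variable {a : ℝ} {f : ℝ → ℝ} {C : ℝ}

lemma g_ii (hmeas : Measurable f) (hC : ∀ x, |f x| ≤ C) (x y : ℝ) : IntervalIntegrable (gfun a f) volume x y :=
  psi_f_ii hmeas hC _ (by continuity) x y

lemma p_ii (hmeas : Measurable f) (hC : ∀ x, |f x| ≤ C) (x y : ℝ) : IntervalIntegrable (pfun a f) volume x y :=
  psi_f_ii hmeas hC _ (by continuity) x y

lemma q_ii (hmeas : Measurable f) (hC : ∀ x, |f x| ≤ C) (x y : ℝ) : IntervalIntegrable (qfun a f) volume x y :=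
  psi_f_ii hmeas hC _ (by continuity) x y

lemma Gfun_cont (hmeas : Measurable f) (hC : ∀ x, |f x| ≤ C) : Continuous (Gfun a f) :=
  intervalIntegral.continuous_primitive (g_ii hmeas hC) 0

lemma Kfun_cont (hmeas : Measurable f) (hC : ∀ x, |f x| ≤ C) : Continuous (Kfun a f) :=
  intervalIntegral.continuous_primitive (p_ii hmeas hC) 0

lemma Qfun_cont (hmeas : Measurable f) (hC : ∀ x, |f x| ≤ C) : Continuous (Qfun a f) :=
  intervalIntegral.continuous_primitive (q_ii hmeas hC) 0

lemma K_eq (hmeas : Measurable f) (hC : ∀ x, |f x| ≤ C) (t : ℝ) : Kfun a f t = Gfun a f t + Qfun a f t := by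
  have hpt : ∀ s, pfun a f s = gfun a f s + qfun a f s := by
    intro s
    have e4 : Real.exp (-(2*a)*s) * Real.exp (a*s) = Real.exp (-(a*s)) := by
      rw [← Real.exp_add]; congr 1; ring
    simp only [pfun, gfun, qfun]
    linear_combination (-(f s)) * e4
  rw [Kfun, Gfun, Qfun, ← intervalIntegral.integral_add (g_ii hmeas hC 0 t) (q_ii hmeas hC 0 t)]
  exact intervalIntegral.integral_congr (fun s _ => hpt s)

lemma E2_eq (s : ℝ) (hs : 0 ≤ s) :
    ∫ u in Set.Ioc (0:ℝ) s, hfun a u = Real.exp (-(2*a)*s) - 1 := by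
  rw [← intervalIntegral.integral_of_le hs]
  simpa [hfun] using exp_ftc (-(2*a)) s


lemma W_nonneg {a : ℝ} (ha : a ≤ 0) {n : ℝ} (hn : 0 ≤ n) {f : ℝ → ℝ}
    (hmeas : Measurable f) {C : ℝ} (hC : ∀ x, |f x| ≤ C) :
    0 ≤ ∫ t in Set.Ioc (0:ℝ) n, gfun a f t * (Kfun a f t + Gfun a f t) := by
  have hCnn : 0 ≤ C := le_trans (abs_nonneg _) (hC 0)
  have hgmeas : Measurable (gfun a f) := by
    exact ((by continuity : Continuous fun s : ℝ => Real.exp (a*s))).measurable.mul hmeas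
  have hGcont : Continuous (Gfun a f) := Gfun_cont hmeas hC
  have hKcont : Continuous (Kfun a f) := Kfun_cont hmeas hC
  have hQcont : Continuous (Qfun a f) := Qfun_cont hmeas hC
  have hhcont : Continuous (hfun a) := by unfold hfun; continuity
  have hhnn : ∀ u : ℝ, 0 ≤ hfun a u :=
    fun u => mul_nonneg (by linarith) (Real.exp_pos _).le
  -- pointwise bound for g on Ioc 0 n
  have hgb : ∀ x ∈ Set.Ioc (0:ℝ) n, |gfun a f x| ≤ C := by
    intro x hx
    rw [gfun, abs_mul, abs_of_pos (Real.exp_pos _)]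
    have h1 : Real.exp (a*x) ≤ 1 := Real.exp_le_one_iff.mpr (by nlinarith [hx.1.le])
    nlinarith [abs_nonneg (f x), hC x, (Real.exp_pos (a*x)).le]
  -- bound for G on subintervals of Ioc 0 n
  have hGd : ∀ u t : ℝ, u ≤ t → (∫ s in Set.Ioc u t, gfun a f s) = Gfun a f t - Gfun a f u := by
    intro u t hut
    rw [← intervalIntegral.integral_of_le hut]
    have h2 := intervalIntegral.integral_add_adjacent_intervals
      (g_ii (a := a) hmeas hC 0 u) (g_ii (a := a) hmeas hC u t)
    simp only [Gfun]
    linarith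
  have hGb : ∀ t ∈ Set.Ioc (0:ℝ) n, |Gfun a f t| ≤ C * n := by
    intro t ht
    have h1 : ‖∫ s in (0:ℝ)..t, gfun a f s‖ ≤ C * |t - 0| := by
      apply intervalIntegral.norm_integral_le_of_norm_le_const
      intro x hx
      rw [Set.uIoc_of_le ht.1.le] at hx
      rw [Real.norm_eq_abs]
      exact hgb x ⟨hx.1, le_trans hx.2 ht.2⟩
    rw [Real.norm_eq_abs] at h1
    simp only [Gfun]
    refine le_trans h1 ?_
    rw [sub_zero, abs_of_pos ht.1]
    nlinarith [ht.2]
  have hKb : ∀ t ∈ Set.Ioc (0:ℝ) n, |Kfun a f t| ≤ (Real.exp (-(a*n)) * C) * n := by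
    intro t ht
    have h1 : ‖∫ s in (0:ℝ)..t, pfun a f s‖ ≤ (Real.exp (-(a*n)) * C) * |t - 0| := by
      apply intervalIntegral.norm_integral_le_of_norm_le_const
      intro x hx
      rw [Set.uIoc_of_le ht.1.le] at hx
      rw [Real.norm_eq_abs, pfun, abs_mul, abs_of_pos (Real.exp_pos _)]
      have hxn : x ≤ n := le_trans hx.2 ht.2
      have h2 : Real.exp (-(a*x)) ≤ Real.exp (-(a*n)) :=
        Real.exp_le_exp.mpr (by nlinarith [hx.1.le])
      nlinarith [abs_nonneg (f x), hC x, (Real.exp_pos (-(a*x))).le]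
    rw [Real.norm_eq_abs] at h1
    simp only [Kfun]
    refine le_trans h1 ?_
    rw [sub_zero, abs_of_pos ht.1]
    nlinarith [ht.2, (Real.exp_pos (-(a*n))).le, mul_nonneg (Real.exp_pos (-(a*n))).le hCnn]
  have hQb : ∀ t ∈ Set.Ioc (0:ℝ) n, |Qfun a f t| ≤ ((Real.exp (-(2*a)*n) + 1) * C) * n := by
    intro t ht
    have h1 : ‖∫ s in (0:ℝ)..t, qfun a f s‖ ≤ ((Real.exp (-(2*a)*n) + 1) * C) * |t - 0| := by
      apply intervalIntegral.norm_integral_le_of_norm_le_const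
      intro x hx
      rw [Set.uIoc_of_le ht.1.le] at hx
      have hxn : x ≤ n := le_trans hx.2 ht.2
      rw [Real.norm_eq_abs, qfun, abs_mul, abs_mul, abs_of_pos (Real.exp_pos _)]
      have h2 : Real.exp (-(2*a)*x) ≤ Real.exp (-(2*a)*n) :=
        Real.exp_le_exp.mpr (by nlinarith [hx.1.le])
      have h3 : |Real.exp (-(2*a)*x) - 1| ≤ Real.exp (-(2*a)*n) + 1 := by
        rw [abs_le]
        constructor
        · nlinarith [(Real.exp_pos (-(2*a)*x)).le, (Real.exp_pos (-(2*a)*n)).le]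
        · nlinarith
      have h4 : Real.exp (a*x) ≤ 1 := Real.exp_le_one_iff.mpr (by nlinarith [hx.1.le])
      have h5 : |Real.exp (-(2*a)*x) - 1| * Real.exp (a*x) ≤ Real.exp (-(2*a)*n) + 1 := by
        nlinarith [abs_nonneg (Real.exp (-(2*a)*x) - 1), (Real.exp_pos (a*x)).le]
      nlinarith [abs_nonneg (f x), hC x,
        mul_nonneg (abs_nonneg (Real.exp (-(2*a)*x) - 1)) (Real.exp_pos (a*x)).le,
        (Real.exp_pos (-(2*a)*n)).le]
    rw [Real.norm_eq_abs] at h1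
    simp only [Qfun]
    refine le_trans h1 ?_
    rw [sub_zero, abs_of_pos ht.1]
    have hpos : 0 ≤ (Real.exp (-(2*a)*n) + 1) * C := by positivity
    nlinarith [ht.2]
  have hhb : ∀ u ∈ Set.Ioc (0:ℝ) n, |hfun a u| ≤ (-(2*a)) * Real.exp (-(2*a)*n) := by
    intro u hu
    rw [abs_of_nonneg (hhnn u), hfun]
    have h2 : Real.exp (-(2*a)*u) ≤ Real.exp (-(2*a)*n) :=
      Real.exp_le_exp.mpr (by nlinarith [hu.1.le, hu.2])
    nlinarith [(Real.exp_pos (-(2*a)*u)).le]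
  -- integrability of the products
  have hIgK : IntegrableOn (fun t => gfun a f t * Kfun a f t) (Set.Ioc (0:ℝ) n) := by
    refine intOnIoc (hgmeas.mul hKcont.measurable) (C := C * ((Real.exp (-(a*n)) * C) * n)) ?_
    intro t ht
    rw [abs_mul]
    exact mul_le_mul (hgb t ht) (hKb t ht) (abs_nonneg _) hCnn
  have hIgG : IntegrableOn (fun t => gfun a f t * Gfun a f t) (Set.Ioc (0:ℝ) n) := by
    refine intOnIoc (hgmeas.mul hGcont.measurable) (C := C * (C * n)) ?_
    intro t ht
    rw [abs_mul]
    exact mul_le_mul (hgb t ht) (hGb t ht) (abs_nonneg _) hCnn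
  have hIgQ : IntegrableOn (fun t => gfun a f t * Qfun a f t) (Set.Ioc (0:ℝ) n) := by
    refine intOnIoc (hgmeas.mul hQcont.measurable)
      (C := C * (((Real.exp (-(2*a)*n) + 1) * C) * n)) ?_
    intro t ht
    rw [abs_mul]
    exact mul_le_mul (hgb t ht) (hQb t ht) (abs_nonneg _) hCnn
  -- the gG integral is a square
  have hgG : ∫ t in Set.Ioc (0:ℝ) n, gfun a f t * Gfun a f t
      = (∫ s in Set.Ioc (0:ℝ) n, gfun a f s) ^ 2 / 2 := by
    have h1 : ∀ t ∈ Set.Ioc (0:ℝ) n,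
        gfun a f t * Gfun a f t = (∫ s in Set.Ioc 0 t, gfun a f s) * gfun a f t := by
      intro t ht
      simp only [Gfun]
      rw [intervalIntegral.integral_of_le ht.1.le, mul_comm]
    rw [setIntegral_congr_fun measurableSet_Ioc h1]
    exact symm_sq hn hgmeas (g_ii hmeas hC) hgb
  -- the M term
  have hMrep : ∀ t ∈ Set.Ioc (0:ℝ) n, gfun a f t * Qfun a f t
      = ∫ u in Set.Ioc 0 t, hfun a u * ((Gfun a f t - Gfun a f u) * gfun a f t) := by
    intro t ht
    have h1 : Qfun a f t = ∫ s in Set.Ioc (0:ℝ) t, qfun a f s := by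
      simp only [Qfun]; rw [intervalIntegral.integral_of_le ht.1.le]
    have h2 : ∀ s ∈ Set.Ioc (0:ℝ) t,
        qfun a f s = ∫ u in Set.Ioc (0:ℝ) s, hfun a u * gfun a f s := by
      intro s hs
      rw [MeasureTheory.integral_mul_const, E2_eq s hs.1.le]
      simp only [qfun, gfun]; ring
    have h4 : ∫ s in Set.Ioc (0:ℝ) t, ∫ u in Set.Ioc (0:ℝ) s, hfun a u * gfun a f s
        = ∫ u in Set.Ioc (0:ℝ) t, ∫ s in Set.Ioc u t, hfun a u * gfun a f s := by
      refine triangle_swap (fun u s => hfun a u * gfun a f s)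
        ((hhcont.measurable.comp measurable_fst).mul (hgmeas.comp measurable_snd))
        ((-(2*a)) * Real.exp (-(2*a)*n) * C) ?_
      intro u hu s hs
      have hsub : Set.Ioc (0:ℝ) t ⊆ Set.Ioc (0:ℝ) n := Set.Ioc_subset_Ioc_right ht.2
      rw [abs_mul]
      exact mul_le_mul (hhb u (hsub hu)) (hgb s (hsub hs)) (abs_nonneg _)
        (mul_nonneg (by linarith) (Real.exp_pos _).le)
    have h5 : ∀ u ∈ Set.Ioc (0:ℝ) t,
        (∫ s in Set.Ioc u t, hfun a u * gfun a f s) = hfun a u * (Gfun a f t - Gfun a f u) := by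
      intro u hu
      rw [MeasureTheory.integral_const_mul, hGd u t hu.2]
    rw [h1, setIntegral_congr_fun measurableSet_Ioc h2, h4,
      setIntegral_congr_fun measurableSet_Ioc h5, ← MeasureTheory.integral_const_mul]
    refine setIntegral_congr_fun measurableSet_Ioc (fun u _ => ?_)
    ring
  have hM2 : ∫ t in Set.Ioc (0:ℝ) n, gfun a f t * Qfun a f t
      = ∫ u in Set.Ioc (0:ℝ) n, ∫ t in Set.Ioc u n,
          hfun a u * ((Gfun a f t - Gfun a f u) * gfun a f t) := by
    rw [setIntegral_congr_fun measurableSet_Ioc hMrep]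
    refine triangle_swap (fun u t => hfun a u * ((Gfun a f t - Gfun a f u) * gfun a f t))
      ((hhcont.measurable.comp measurable_fst).mul
        ((((hGcont.measurable.comp measurable_snd).sub
          (hGcont.measurable.comp measurable_fst))).mul (hgmeas.comp measurable_snd)))
      ((-(2*a)) * Real.exp (-(2*a)*n) * ((C * n + C * n) * C)) ?_
    intro u hu t ht
    rw [abs_mul, abs_mul]
    have hb1 : |Gfun a f t - Gfun a f u| ≤ C * n + C * n :=
      le_trans (abs_sub _ _) (add_le_add (hGb t ht) (hGb u hu))
    have hb2 : |(Gfun a f t - Gfun a f u)| * |gfun a f t| ≤ (C * n + C * n) * C :=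
      mul_le_mul hb1 (hgb t ht) (abs_nonneg _) (by positivity)
    refine mul_le_mul (hhb u hu) hb2 (by positivity) ?_
    exact le_trans (abs_nonneg _) (hhb u hu)
  have hM3 : ∀ u ∈ Set.Ioc (0:ℝ) n,
      (∫ t in Set.Ioc u n, hfun a u * ((Gfun a f t - Gfun a f u) * gfun a f t))
        = hfun a u * ((∫ t in Set.Ioc u n, gfun a f t) ^ 2 / 2) := by
    intro u hu
    rw [MeasureTheory.integral_const_mul]
    congr 1
    have h1 : ∀ t ∈ Set.Ioc u n,
        (Gfun a f t - Gfun a f u) * gfun a f t = (∫ s in Set.Ioc u t, gfun a f s) * gfun a f t := by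
      intro t ht
      rw [hGd u t ht.1.le]
    rw [setIntegral_congr_fun measurableSet_Ioc h1]
    exact symm_sq hu.2 hgmeas (g_ii hmeas hC)
      (fun x hx => hgb x (Set.Ioc_subset_Ioc_left hu.1.le hx))
  have hMnn : 0 ≤ ∫ t in Set.Ioc (0:ℝ) n, gfun a f t * Qfun a f t := by
    rw [hM2, setIntegral_congr_fun measurableSet_Ioc hM3]
    refine setIntegral_nonneg measurableSet_Ioc (fun u _ => ?_)
    exact mul_nonneg (hhnn u) (by positivity)
  -- assemble
  have hgK : ∫ t in Set.Ioc (0:ℝ) n, gfun a f t * Kfun a f t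
      = (∫ t in Set.Ioc (0:ℝ) n, gfun a f t * Gfun a f t)
        + ∫ t in Set.Ioc (0:ℝ) n, gfun a f t * Qfun a f t := by
    have h1 : ∀ t ∈ Set.Ioc (0:ℝ) n, gfun a f t * Kfun a f t
        = gfun a f t * Gfun a f t + gfun a f t * Qfun a f t := by
      intro t _
      rw [K_eq hmeas hC t]; ring
    rw [setIntegral_congr_fun measurableSet_Ioc h1, integral_add hIgG hIgQ]
  have hsplit : ∫ t in Set.Ioc (0:ℝ) n, gfun a f t * (Kfun a f t + Gfun a f t)
      = (∫ t in Set.Ioc (0:ℝ) n, gfun a f t * Kfun a f t)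
        + ∫ t in Set.Ioc (0:ℝ) n, gfun a f t * Gfun a f t := by
    simp only [mul_add]
    exact integral_add hIgK hIgG
  rw [hsplit, hgK, hgG]
  have := sq_nonneg (∫ s in Set.Ioc (0:ℝ) n, gfun a f s)
  linarith

section bounds
variable {a n : ℝ} {f : ℝ → ℝ} {C : ℝ}

lemma gb (ha : a ≤ 0) (hC : ∀ x, |f x| ≤ C) :
    ∀ x ∈ Set.Ioc (0:ℝ) n, |gfun a f x| ≤ C := by
  intro x hx
  rw [gfun, abs_mul, abs_of_pos (Real.exp_pos _)]
  have h1 : Real.exp (a*x) ≤ 1 := Real.exp_le_one_iff.mpr (by nlinarith [hx.1.le])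
  have hCnn : 0 ≤ C := le_trans (abs_nonneg _) (hC 0)
  nlinarith [abs_nonneg (f x), hC x, (Real.exp_pos (a*x)).le]

lemma Gb (ha : a ≤ 0) (hC : ∀ x, |f x| ≤ C) :
    ∀ t ∈ Set.Ioc (0:ℝ) n, |Gfun a f t| ≤ C * n := by
  intro t ht
  have h1 : ‖∫ s in (0:ℝ)..t, gfun a f s‖ ≤ C * |t - 0| := by
    apply intervalIntegral.norm_integral_le_of_norm_le_const
    intro x hx
    rw [Set.uIoc_of_le ht.1.le] at hx
    rw [Real.norm_eq_abs]
    exact gb ha hC x ⟨hx.1, le_trans hx.2 ht.2⟩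
  rw [Real.norm_eq_abs] at h1
  simp only [Gfun]
  refine le_trans h1 ?_
  rw [sub_zero, abs_of_pos ht.1]
  have hCnn : 0 ≤ C := le_trans (abs_nonneg _) (hC 0)
  nlinarith [ht.2]

lemma Kb (ha : a ≤ 0) (hC : ∀ x, |f x| ≤ C) :
    ∀ t ∈ Set.Ioc (0:ℝ) n, |Kfun a f t| ≤ (Real.exp (-(a*n)) * C) * n := by
  intro t ht
  have hCnn : 0 ≤ C := le_trans (abs_nonneg _) (hC 0)
  have h1 : ‖∫ s in (0:ℝ)..t, pfun a f s‖ ≤ (Real.exp (-(a*n)) * C) * |t - 0| := by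
    apply intervalIntegral.norm_integral_le_of_norm_le_const
    intro x hx
    rw [Set.uIoc_of_le ht.1.le] at hx
    rw [Real.norm_eq_abs, pfun, abs_mul, abs_of_pos (Real.exp_pos _)]
    have hxn : x ≤ n := le_trans hx.2 ht.2
    have h2 : Real.exp (-(a*x)) ≤ Real.exp (-(a*n)) :=
      Real.exp_le_exp.mpr (by nlinarith [hx.1.le])
    nlinarith [abs_nonneg (f x), hC x, (Real.exp_pos (-(a*x))).le]
  rw [Real.norm_eq_abs] at h1
  simp only [Kfun]
  refine le_trans h1 ?_
  rw [sub_zero, abs_of_pos ht.1]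
  nlinarith [ht.2, (Real.exp_pos (-(a*n))).le, mul_nonneg (Real.exp_pos (-(a*n))).le hCnn]

lemma gKG_intOn (ha : a ≤ 0) (hmeas : Measurable f) (hC : ∀ x, |f x| ≤ C) :
    IntegrableOn (fun t => gfun a f t * (Kfun a f t + Gfun a f t)) (Set.Ioc (0:ℝ) n) := by
  have hCnn : 0 ≤ C := le_trans (abs_nonneg _) (hC 0)
  have hgmeas : Measurable (gfun a f) := by
    exact ((by continuity : Continuous fun s : ℝ => Real.exp (a*s))).measurable.mul hmeas
  refine intOnIoc (hgmeas.mul ((Kfun_cont hmeas hC).measurable.add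
    (Gfun_cont hmeas hC).measurable))
    (C := C * ((Real.exp (-(a*n)) * C) * n + C * n)) ?_
  intro t ht
  rw [abs_mul]
  refine mul_le_mul (gb ha hC t ht) (le_trans (abs_add_le _ _)
    (add_le_add (Kb ha hC t ht) (Gb ha hC t ht))) (abs_nonneg _) hCnn

lemma E_rewrite (ha : a ≤ 0) (hn : 0 ≤ n) (hmeas : Measurable f) (hC : ∀ x, |f x| ≤ C) :
    (∫ t in (0:ℝ)..n,
        ((f t) ^ 2 +
          2 * (a * ∫ s in (0:ℝ)..t,
            Real.exp (a * (t - s)) * f s * ((1 + Real.exp (2 * a * s)) / 2)) * f t))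
      = (∫ t in Set.Ioc (0:ℝ) n, (f t) ^ 2)
        + a * ∫ t in Set.Ioc (0:ℝ) n, gfun a f t * (Kfun a f t + Gfun a f t) := by
  rw [intervalIntegral.integral_of_le hn]
  have hpt : ∀ t ∈ Set.Ioc (0:ℝ) n,
      ((f t) ^ 2 +
          2 * (a * ∫ s in (0:ℝ)..t,
            Real.exp (a * (t - s)) * f s * ((1 + Real.exp (2 * a * s)) / 2)) * f t)
        = (f t) ^ 2 + a * (gfun a f t * (Kfun a f t + Gfun a f t)) := by
    intro t ht
    have hinner : (∫ s in (0:ℝ)..t,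
        Real.exp (a * (t - s)) * f s * ((1 + Real.exp (2 * a * s)) / 2))
          = Real.exp (a*t) / 2 * (Kfun a f t + Gfun a f t) := by
      rw [intervalIntegral.integral_of_le ht.1.le]
      have hps : ∀ s : ℝ, Real.exp (a * (t - s)) * f s * ((1 + Real.exp (2 * a * s)) / 2)
          = Real.exp (a*t) / 2 * (pfun a f s + gfun a f s) := by
        intro s
        have e1 : Real.exp (a*(t-s)) = Real.exp (a*t) * Real.exp (-(a*s)) := by
          rw [← Real.exp_add]; congr 1; ring
        have e2 : Real.exp (2*a*s) = Real.exp (a*s) * Real.exp (a*s) := by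
          rw [← Real.exp_add]; congr 1; ring
        have e3 : Real.exp (-(a*s)) * Real.exp (a*s) = 1 := by
          rw [← Real.exp_add]; simp
        simp only [pfun, gfun]
        rw [e1, e2]
        linear_combination (Real.exp (a*t) * f s * Real.exp (a*s) / 2) * e3
      rw [setIntegral_congr_fun measurableSet_Ioc (fun s _ => hps s),
        MeasureTheory.integral_const_mul,
        integral_add ((p_ii (a := a) hmeas hC 0 t).1) ((g_ii (a := a) hmeas hC 0 t).1)]
      simp only [Kfun, Gfun]
      rw [intervalIntegral.integral_of_le ht.1.le, intervalIntegral.integral_of_le ht.1.le]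
    rw [hinner]
    simp only [gfun]
    ring
  rw [setIntegral_congr_fun measurableSet_Ioc hpt,
    integral_add (intOnIoc (hmeas.pow_const 2) (C := C^2) ?_)
      ((gKG_intOn ha hmeas hC).const_mul a),
    MeasureTheory.integral_const_mul]
  intro x _
  rw [abs_pow]
  exact pow_le_pow_left₀ (abs_nonneg _) (hC x) 2
end bounds


/-- If the second moment of the stochastic integral satisfies the covariance identity
`E I_n(f)² = σ ∫_0^n (f²(t) + 2 ξ̌_t(f) f(t)) dt` with `a ≤ 0`, then
`E I_n(f)² ≤ 2σ ∫_0^n f²(s) ds`. -/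
theorem second_moment_bound (a σ : ℝ) (ha : a ≤ 0) (hσ : 0 < σ) (n : ℕ)
    (f : ℝ → ℝ) (hmeas : Measurable f) (hb : ∃ C, ∀ x, |f x| ≤ C)
    (E : ℝ)
    (hE : E = σ * ∫ t in (0:ℝ)..(n:ℝ),
        ((f t) ^ 2 +
          2 * (a * ∫ s in (0:ℝ)..t,
            Real.exp (a * (t - s)) * f s * ((1 + Real.exp (2 * a * s)) / 2)) * f t)) :
    E ≤ 2 * σ * ∫ s in (0:ℝ)..(n:ℝ), (f s) ^ 2 := by
  obtain ⟨C, hC⟩ := hb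
  have hn : (0:ℝ) ≤ (n:ℝ) := Nat.cast_nonneg n
  have hE2 : E = σ * ((∫ t in Set.Ioc (0:ℝ) (n:ℝ), (f t) ^ 2)
      + a * ∫ t in Set.Ioc (0:ℝ) (n:ℝ), gfun a f t * (Kfun a f t + Gfun a f t)) := by
    rw [hE, E_rewrite ha hn hmeas hC]
  have hW := W_nonneg ha hn hmeas hC
  have hX : 0 ≤ ∫ t in Set.Ioc (0:ℝ) (n:ℝ), (f t) ^ 2 :=
    setIntegral_nonneg measurableSet_Ioc (fun x _ => sq_nonneg _)
  have haW : a * (∫ t in Set.Ioc (0:ℝ) (n:ℝ), gfun a f t * (Kfun a f t + Gfun a f t)) ≤ 0 :=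
    mul_nonpos_iff.mpr (Or.inr ⟨ha, hW⟩)
  rw [intervalIntegral.integral_of_le hn, hE2]
  nlinarith [mul_nonneg hσ.le hX, mul_nonpos_iff.mpr (Or.inl ⟨hσ.le, haW⟩)]
end aux
end

section
/- Let d ≥ 7 and suppose the basis satisfies ∫_0^1 Φ*_d(v) dv ≤ ǎ d with ǎ = (1 − e^{−a_max})/(4 a_max) for some a_max > 0, and let −a_max ≤ a ≤ 0. Define tr G = d + (a/n) ∫_0^n e^{av} (∫_v^n Φ(t,v)(1 + e^{2a(t−v)}) dt) dv with |Φ(t,v)| ≤ Φ*_d(v) and Φ*_d 1-periodic in v. Then tr G > d/2. -/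
open MeasureTheory Real

/-- Concavity-type inequality: `x ↦ (1 - exp (-x))/x` is antitone on `(0, ∞)`. -/
lemma exp_ratio_mono_aux {x y : ℝ} (hx : 0 < x) (hxy : x ≤ y) :
    x * (1 - Real.exp (-y)) ≤ y * (1 - Real.exp (-x)) := by
  have hy : 0 < y := hx.trans_le hxy
  have h2 : (0:ℝ) ≤ x / y := by positivity
  have h3 : (0:ℝ) ≤ 1 - x / y := by
    rw [sub_nonneg]
    exact div_le_one_of_le₀ hxy hy.le
  have h1 : x / y + (1 - x / y) = 1 := by ring
  have h := convexOn_exp.2 (Set.mem_univ (-y)) (Set.mem_univ (0:ℝ)) h2 h3 h1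
  simp only [smul_eq_mul, mul_zero, add_zero, Real.exp_zero, mul_one] at h
  have hxy' : x / y * -y = -x := by field_simp
  rw [hxy'] at h
  nlinarith [Real.exp_pos (-x), Real.exp_pos (-y)]

set_option maxHeartbeats 1000000 in
/-- Lower bound for the trace of the covariance matrix: if `d ≥ 7`,
`∫_0^1 Φ*_d ≤ ǎ d` with `ǎ = (1 − e^{−a_max})/(4 a_max)`, `−a_max ≤ a ≤ 0` and
`tr G = d + (a/n) ∫_0^n e^{av} (∫_v^n Φ(t,v)(1+e^{2a(t−v)}) dt) dv` with
`|Φ(t,v)| ≤ Φ*_d(v)` and `Φ*_d` nonnegative and `1`-periodic, then `tr G > d/2`. -/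
theorem trace_gt_half (d n : ℕ) (hd : 7 ≤ d) (hn : 1 ≤ n)
    (amax a : ℝ) (hamax : 0 < amax) (ha1 : -amax ≤ a) (ha2 : a ≤ 0)
    (Φ : ℝ → ℝ → ℝ) (Φs : ℝ → ℝ)
    (hΦmeas : Measurable (Function.uncurry Φ))
    (hΦsint : IntervalIntegrable Φs volume 0 1)
    (hΦs0 : ∀ v, 0 ≤ Φs v)
    (hper : ∀ v, Φs (v + 1) = Φs v)
    (hbd : ∀ t v, |Φ t v| ≤ Φs v)
    (hint1 : ∫ v in (0:ℝ)..1, Φs v ≤ ((1 - Real.exp (-amax)) / (4 * amax)) * d)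
    (T : ℝ)
    (hT : T = d + (a / n) * ∫ v in (0:ℝ)..(n:ℝ),
        Real.exp (a * v) *
          ∫ t in v..(n:ℝ), Φ t v * (1 + Real.exp (2 * a * (t - v)))) :
    T > d / 2 := by
  have hdR : (7:ℝ) ≤ (d:ℝ) := by exact_mod_cast hd
  have hd0 : (0:ℝ) < d := by linarith
  by_cases h0 : a = 0
  · rw [hT, h0]
    simp only [zero_div, zero_mul, add_zero]
    linarith
  have hneg : a < 0 := lt_of_le_of_ne ha2 h0
  have hnR : (1:ℝ) ≤ (n:ℝ) := by exact_mod_cast hn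
  have hn0 : (0:ℝ) < n := by linarith
  have hP : Function.Periodic Φs 1 := hper
  -- Φs is interval integrable on each [k, k+1]
  have hΦsk : ∀ k : ℕ, IntervalIntegrable Φs volume k ((k:ℝ)+1) := by
    intro k
    have h := hΦsint.comp_sub_right (k:ℝ)
    have heq : (fun x => Φs (x - (k:ℝ))) = Φs := by
      funext x
      simpa using hP.sub_nat_mul_eq (x := x) k
    rw [heq] at h
    simpa [add_comm] using h
  -- the weighted integrand
  set f : ℝ → ℝ := fun v => Real.exp (a*v) * Φs v with hfdef
  have hfk : ∀ k : ℕ, IntervalIntegrable f volume k ((k:ℝ)+1) := fun k =>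
    (hΦsk k).continuousOn_mul (Continuous.continuousOn (by continuity))
  have hfn : ∀ m : ℕ, IntervalIntegrable f volume 0 m := by
    intro m
    induction m with
    | zero => simp
    | succ m ih =>
      have := ih.trans (hfk m)
      simpa [Nat.cast_succ] using this
  set S := ∫ v in (0:ℝ)..1, Φs v with hSdef
  have hS0 : 0 ≤ S := intervalIntegral.integral_nonneg zero_le_one (fun x _ => hΦs0 x)
  -- bound on each unit interval
  have hstep : ∀ k : ℕ, (∫ v in (k:ℝ)..((k:ℝ)+1), f v) ≤ Real.exp (a*k) * S := by
    intro k
    have h1 : (∫ v in (k:ℝ)..((k:ℝ)+1), f v)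
        ≤ ∫ v in (k:ℝ)..((k:ℝ)+1), Real.exp (a*(k:ℝ)) * Φs v := by
      apply intervalIntegral.integral_mono_on (by linarith) (hfk k) ((hΦsk k).const_mul _)
      intro x hx
      have hex : Real.exp (a*x) ≤ Real.exp (a*(k:ℝ)) := by
        apply Real.exp_le_exp.2
        nlinarith [hx.1]
      exact mul_le_mul_of_nonneg_right hex (hΦs0 x)
    have h2 : (∫ v in (k:ℝ)..((k:ℝ)+1), Φs v) = S := by
      simpa using hP.intervalIntegral_add_eq (k:ℝ) 0
    rw [intervalIntegral.integral_const_mul, h2] at h1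
    exact h1
  -- split [0, n] into unit intervals
  have hsplit : (∫ v in (0:ℝ)..(n:ℝ), f v)
      = ∑ k ∈ Finset.range n, ∫ v in (k:ℝ)..((k:ℝ)+1), f v := by
    have h := intervalIntegral.sum_integral_adjacent_intervals
      (a := fun k : ℕ => (k:ℝ)) (n := n) (μ := volume) (f := f)
      (fun k _ => by simpa [Nat.cast_succ] using hfk k)
    simp only [Nat.cast_zero, Nat.cast_succ] at h
    exact h.symm
  -- geometric sum
  have hexp1 : Real.exp a < 1 := Real.exp_lt_one_iff.2 hneg
  have hE : 0 < 1 - Real.exp a := by linarith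
  have hgeom : ∑ k ∈ Finset.range n, Real.exp (a*k)
      = (1 - Real.exp (a*n)) / (1 - Real.exp a) := by
    have hx : Real.exp a ≠ 1 := ne_of_lt hexp1
    have h := geom_sum_eq hx n
    have h1 : ∀ k : ℕ, Real.exp (a*k) = (Real.exp a)^k := by
      intro k
      rw [mul_comm, Real.exp_nat_mul]
    have h2 : Real.exp (a*n) = (Real.exp a)^n := h1 n
    calc ∑ k ∈ Finset.range n, Real.exp (a*k)
        = ∑ k ∈ Finset.range n, (Real.exp a)^k := by
          exact Finset.sum_congr rfl fun k _ => h1 k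
      _ = ((Real.exp a)^n - 1)/(Real.exp a - 1) := h
      _ = (1 - Real.exp (a*n)) / (1 - Real.exp a) := by
          rw [h2]
          rw [div_eq_div_iff (by linarith) (by linarith)]
          ring
  -- bound for B := ∫_0^n f
  set B := ∫ v in (0:ℝ)..(n:ℝ), f v with hBdef
  have hB0 : 0 ≤ B := intervalIntegral.integral_nonneg (by linarith)
    (fun x _ => mul_nonneg (Real.exp_pos _).le (hΦs0 x))
  have hBle : B ≤ ((1 - Real.exp (a*n)) / (1 - Real.exp a)) * S := by
    rw [hsplit]
    calc ∑ k ∈ Finset.range n, ∫ v in (k:ℝ)..((k:ℝ)+1), f v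
        ≤ ∑ k ∈ Finset.range n, Real.exp (a*k) * S :=
          Finset.sum_le_sum fun k _ => hstep k
      _ = (∑ k ∈ Finset.range n, Real.exp (a*k)) * S := by rw [Finset.sum_mul]
      _ = ((1 - Real.exp (a*n)) / (1 - Real.exp a)) * S := by rw [hgeom]
  -- bound for the main double integral
  set I := ∫ v in (0:ℝ)..(n:ℝ), Real.exp (a * v) *
      ∫ t in v..(n:ℝ), Φ t v * (1 + Real.exp (2 * a * (t - v))) with hIdef
  have hIbd : |I| ≤ 2 * n * B := by
    have hbint : IntervalIntegrable (fun v => 2 * (n:ℝ) * f v) volume 0 (n:ℝ) :=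
      (hfn n).const_mul _
    have hbound : ∀ᵐ v ∂(volume.restrict (Set.uIoc (0:ℝ) (n:ℝ))),
        ‖Real.exp (a * v) *
          ∫ t in v..(n:ℝ), Φ t v * (1 + Real.exp (2 * a * (t - v)))‖
          ≤ 2 * (n:ℝ) * f v := by
      rw [ae_restrict_iff' measurableSet_uIoc]
      apply ae_of_all
      intro v hv
      rw [Set.uIoc_of_le (by linarith : (0:ℝ) ≤ (n:ℝ))] at hv
      have hv0 : 0 < v := hv.1
      have hvn : v ≤ (n:ℝ) := hv.2
      have hinner : ‖∫ t in v..(n:ℝ), Φ t v * (1 + Real.exp (2 * a * (t - v)))‖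
          ≤ (2 * Φs v) * |(n:ℝ) - v| := by
        apply intervalIntegral.norm_integral_le_of_norm_le_const
        intro t ht
        rw [Set.uIoc_of_le hvn] at ht
        have htv : 0 ≤ t - v := by linarith [ht.1.le]
        have hexple : Real.exp (2 * a * (t - v)) ≤ 1 := by
          apply Real.exp_le_one_iff.2
          nlinarith
        have hexp0 : 0 < Real.exp (2 * a * (t - v)) := Real.exp_pos _
        rw [Real.norm_eq_abs, abs_mul]
        have h1 : |Φ t v| ≤ Φs v := hbd t v
        have h2 : |1 + Real.exp (2 * a * (t - v))| ≤ 2 := by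
          rw [abs_of_nonneg (by linarith)]
          linarith
        calc |Φ t v| * |1 + Real.exp (2 * a * (t - v))|
            ≤ Φs v * 2 := mul_le_mul h1 h2 (abs_nonneg _) (hΦs0 v)
          _ = 2 * Φs v := by ring
      have habsnv : |(n:ℝ) - v| ≤ (n:ℝ) := by
        rw [abs_of_nonneg (by linarith)]; linarith
      rw [Real.norm_eq_abs, abs_mul, abs_of_nonneg (Real.exp_pos _).le]
      have hΦsv := hΦs0 v
      have hexpv : 0 < Real.exp (a * v) := Real.exp_pos _
      calc Real.exp (a * v) * |∫ t in v..(n:ℝ), Φ t v * (1 + Real.exp (2 * a * (t - v)))|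
          ≤ Real.exp (a * v) * ((2 * Φs v) * |(n:ℝ) - v|) := by
            apply mul_le_mul_of_nonneg_left _ hexpv.le
            simpa [Real.norm_eq_abs] using hinner
        _ ≤ Real.exp (a * v) * ((2 * Φs v) * (n:ℝ)) := by
            apply mul_le_mul_of_nonneg_left _ hexpv.le
            exact mul_le_mul_of_nonneg_left habsnv (by positivity)
        _ = 2 * (n:ℝ) * f v := by rw [hfdef]; ring
    have h := intervalIntegral.norm_integral_le_abs_of_norm_le hbound hbint
    have h2 : (∫ v in (0:ℝ)..(n:ℝ), 2 * (n:ℝ) * f v) = 2 * (n:ℝ) * B := by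
      rw [intervalIntegral.integral_const_mul, hBdef]
    rw [h2] at h
    rw [Real.norm_eq_abs] at h
    calc |I| ≤ |2 * (n:ℝ) * B| := h
      _ = 2 * (n:ℝ) * B := abs_of_nonneg (by positivity)
  clear_value f S B I
  -- final arithmetic
  set x := -a with hxdef
  clear_value x
  have hx0 : 0 < x := by rw [hxdef]; linarith
  have hxm : x ≤ amax := by rw [hxdef]; linarith
  have hEM : 0 < 1 - Real.exp (-amax) := by
    have : Real.exp (-amax) < 1 := Real.exp_lt_one_iff.2 (by linarith)
    linarith
  have hEn1 : 1 - Real.exp (a*n) < 1 := by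
    have := Real.exp_pos (a*n)
    linarith
  have hEn0 : 0 ≤ 1 - Real.exp (a*n) := by
    have : Real.exp (a*n) ≤ 1 := Real.exp_le_one_iff.2 (by nlinarith)
    linarith
  have hexpax : Real.exp (-x) = Real.exp a := by rw [hxdef, neg_neg]
  have hkey : x * (1 - Real.exp (-amax)) ≤ amax * (1 - Real.exp a) := by
    have h := exp_ratio_mono_aux hx0 hxm
    rwa [hexpax] at h
  have habs : |a / n * I| < d / 2 := by
    have h1 : |a / n * I| = x / n * |I| := by
      rw [abs_mul, abs_div, abs_of_pos hn0, abs_of_neg hneg, ← hxdef]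
    have h3 : x / n * (2 * n * B) = 2 * x * B := by field_simp
    have h2 : x / n * |I| ≤ 2 * x * B := by
      rw [← h3]
      exact mul_le_mul_of_nonneg_left hIbd (by positivity)
    rcases eq_or_lt_of_le hS0 with hSz | hSpos
    · have hBz : B ≤ 0 := by
        have h := hBle
        rw [← hSz] at h
        simpa using h
      have h4 : 2 * x * B ≤ 0 := by
        have := mul_le_mul_of_nonneg_left hBz (by positivity : (0:ℝ) ≤ 2 * x)
        simpa using this
      rw [h1]
      linarith
    · have h4 : 2 * x * B ≤ 2 * x * (((1 - Real.exp (a*n)) / (1 - Real.exp a)) * S) :=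
        mul_le_mul_of_nonneg_left hBle (by positivity)
      have h5 : 2 * x * (((1 - Real.exp (a*n)) / (1 - Real.exp a)) * S)
          < 2 * x * ((1 / (1 - Real.exp a)) * S) := by
        apply mul_lt_mul_of_pos_left _ (by positivity)
        apply mul_lt_mul_of_pos_right _ hSpos
        rw [div_lt_div_iff₀ hE hE]
        nlinarith
      have hxEdiv : x / (1 - Real.exp a) ≤ amax / (1 - Real.exp (-amax)) :=
        (div_le_div_iff₀ hE hEM).2 (by nlinarith)
      have h6 : 2 * x * ((1 / (1 - Real.exp a)) * S)
          ≤ 2 * (amax / (1 - Real.exp (-amax))) * S := by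
        have : 2 * x * ((1 / (1 - Real.exp a)) * S) = 2 * (x / (1 - Real.exp a)) * S := by
          ring
        rw [this]
        apply mul_le_mul_of_nonneg_right _ hS0
        linarith
      have h7 : 2 * (amax / (1 - Real.exp (-amax))) * S ≤ d / 2 := by
        have hc : 0 < 2 * (amax / (1 - Real.exp (-amax))) := by positivity
        have h8 := mul_le_mul_of_nonneg_left hint1 hc.le
        calc 2 * (amax / (1 - Real.exp (-amax))) * S
            ≤ 2 * (amax / (1 - Real.exp (-amax))) *
              ((1 - Real.exp (-amax)) / (4 * amax) * d) := h8
          _ = d / 2 := by field_simp; ring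
      rw [h1]
      linarith
  rw [hT]
  have hle := neg_abs_le (a / n * I)
  linarith
end
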